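/- Let q ≥ 1 and let g_α(x) = det(x)^{α-(q+1)/2} for x positive definite symmetric q×q real, extended by 0 elsewhere. If Re α > (q+1)/2 + m for an integer m ≥ 0, then g_α is m times continuously differentiable on the space of real symmetric q×q matrices. -/

import Mathlib

open Matrix Complex Asymptotics Filter Topology

variable (q : ℕ)

/-- Index set for the independent entries of a symmetric `q×q` matrix. -/
abbrev SymIdx (q : ℕ) := {p : Fin q × Fin q // p.1 ≤ p.2}

/-- The symmetric matrix determined by its upper-triangular entries; composing with this
map realizes functions on the vector space `Sym(q,ℝ)` in linear coordinates. -/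
def symOfFun (f : SymIdx q → ℝ) : Matrix (Fin q) (Fin q) ℝ := fun i j =>
  if h : i ≤ j then f ⟨(i, j), h⟩ else f ⟨(j, i), (not_le.mp h).le⟩

open Classical in
/-- `g_α(x) = det(x)^{α-(q+1)/2}` on the cone of positive definite symmetric matrices,
extended by `0` elsewhere. -/
noncomputable def gAlpha (α : ℂ) (x : Matrix (Fin q) (Fin q) ℝ) : ℂ :=
  if x.PosDef then ((x.det : ℝ) : ℂ) ^ (α - ((q : ℂ) + 1) / 2) else 0

lemma symOfFun_apply_symm (f : SymIdx q → ℝ) (i j : Fin q) :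
    symOfFun q f j i = symOfFun q f i j := by
  unfold symOfFun
  rcases lt_trichotomy i j with h | h | h
  · rw [dif_neg (not_le.mpr h), dif_pos h.le]
  · subst h; rfl
  · rw [dif_pos h.le, dif_neg (not_le.mpr h)]

lemma symOfFun_isHermitian (f : SymIdx q → ℝ) : (symOfFun q f).IsHermitian := by
  ext i j
  simp [Matrix.conjTranspose_apply, symOfFun_apply_symm]

lemma contDiff_entry (i j : Fin q) :
    ContDiff ℝ (⊤ : ℕ∞) (fun f : SymIdx q → ℝ => symOfFun q f i j) := by
  unfold symOfFun
  by_cases h : i ≤ j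
  · simp only [dif_pos h]; exact contDiff_apply _ _ _
  · simp only [dif_neg h]; exact contDiff_apply _ _ _

lemma contDiff_d : ContDiff ℝ (⊤ : ℕ∞) (fun f : SymIdx q → ℝ => (symOfFun q f).det) := by
  simp_rw [Matrix.det_apply']
  refine ContDiff.sum fun σ _ => ?_
  exact contDiff_const.mul (contDiff_prod (fun i _ => contDiff_entry q (σ i) i))

lemma continuous_quadform : Continuous fun p : (SymIdx q → ℝ) × (Fin q → ℝ) =>
    p.2 ⬝ᵥ (symOfFun q p.1 *ᵥ p.2) := by
  simp only [dotProduct, Matrix.mulVec]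
  refine continuous_finset_sum _ fun i _ => ((continuous_apply i).comp continuous_snd).mul ?_
  refine continuous_finset_sum _ fun j _ => Continuous.mul ?_ ((continuous_apply j).comp continuous_snd)
  exact ((contDiff_entry q i j).continuous).comp continuous_fst

lemma isOpen_posDef : IsOpen {f : SymIdx q → ℝ | (symOfFun q f).PosDef} := by
  rw [isOpen_iff_mem_nhds]
  intro f₀ hf₀
  have hK : IsCompact (Metric.sphere (0 : Fin q → ℝ) 1) := isCompact_sphere _ _
  have hev : ∀ᶠ f in nhds f₀, ∀ v ∈ Metric.sphere (0 : Fin q → ℝ) 1,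
      0 < v ⬝ᵥ (symOfFun q f *ᵥ v) := by
    refine hK.eventually_forall_of_forall_eventually (fun v hv => ?_)
    have hvne : v ≠ 0 := by
      intro h; rw [Metric.mem_sphere, h] at hv; simp at hv
    have hpos : 0 < v ⬝ᵥ (symOfFun q f₀ *ᵥ v) := by
      have := Matrix.PosDef.dotProduct_mulVec_pos hf₀ hvne
      rwa [star_trivial] at this
    exact ((continuous_quadform q).tendsto (f₀, v)).eventually (eventually_gt_nhds hpos)
  refine Filter.mem_of_superset hev (fun f hf => ?_)
  refine Matrix.PosDef.of_dotProduct_mulVec_pos (symOfFun_isHermitian q f) fun v hv => ?_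
  rw [star_trivial]
  have hw : (‖v‖⁻¹ • v) ∈ Metric.sphere (0 : Fin q → ℝ) 1 := by
    simp [norm_smul, norm_ne_zero_iff.mpr hv, inv_mul_cancel₀]
  have h1 := hf _ hw
  have hexp : v = ‖v‖ • (‖v‖⁻¹ • v) := by
    rw [smul_smul, mul_inv_cancel₀ (norm_ne_zero_iff.mpr hv), one_smul]
  have heq : v ⬝ᵥ (symOfFun q f *ᵥ v) =
      (‖v‖ * ‖v‖) * ((‖v‖⁻¹ • v) ⬝ᵥ (symOfFun q f *ᵥ (‖v‖⁻¹ • v))) := by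
    conv_lhs => rw [hexp]
    rw [Matrix.mulVec_smul, smul_dotProduct, dotProduct_smul,
      smul_eq_mul, smul_eq_mul]
    ring
  rw [heq]
  have := norm_pos_iff.mpr hv
  positivity

lemma posDef_of_psd_det_ne_zero (x : Matrix (Fin q) (Fin q) ℝ)
    (hpsd : x.PosSemidef) (hdet : x.det ≠ 0) : x.PosDef := by
  exact hpsd.posDef_iff_det_ne_zero.mpr hdet

lemma beta_re (α : ℂ) : (α - ((q : ℂ) + 1) / 2).re = α.re - ((q : ℝ) + 1) / 2 := by
  have h : (((q : ℂ) + 1) / 2) = ((((q : ℝ) + 1) / 2 : ℝ) : ℂ) := by push_cast; ring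
  rw [Complex.sub_re, h, Complex.ofReal_re]

lemma norm_gAlpha_le (α : ℂ) (hr : 0 < α.re - ((q : ℝ) + 1) / 2) (f : SymIdx q → ℝ) :
    ‖gAlpha q α (symOfFun q f)‖ ≤ |(symOfFun q f).det| ^ (α.re - ((q : ℝ) + 1) / 2) := by
  by_cases h : (symOfFun q f).PosDef
  · rw [gAlpha, if_pos h,
      Complex.norm_cpow_eq_rpow_re_of_pos h.det_pos, beta_re, abs_of_pos h.det_pos]
  · rw [gAlpha, if_neg h, norm_zero]
    exact Real.rpow_nonneg (abs_nonneg _) _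

lemma gAlpha_eq_zero {x : Matrix (Fin q) (Fin q) ℝ} (h : ¬ x.PosDef) (α : ℂ) :
    gAlpha q α x = 0 := by rw [gAlpha, if_neg h]

lemma eventually_not_posDef (f₀ : SymIdx q → ℝ) (h : ¬ (symOfFun q f₀).PosDef)
    (hdet : (symOfFun q f₀).det ≠ 0) :
    ∀ᶠ f in 𝓝 f₀, ¬ (symOfFun q f).PosDef := by
  set S := {f : SymIdx q → ℝ | ∀ v, 0 ≤ v ⬝ᵥ (symOfFun q f *ᵥ v)} with hS
  have hSclosed : IsClosed S := by
    have : S = ⋂ v, {f : SymIdx q → ℝ | 0 ≤ v ⬝ᵥ (symOfFun q f *ᵥ v)} := by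
      ext f; simp [hS]
    rw [this]
    refine isClosed_iInter fun v => isClosed_le continuous_const ?_
    exact (continuous_quadform q).comp (continuous_id.prodMk continuous_const)
  have hf₀S : f₀ ∉ S := by
    intro hmem
    refine h (posDef_of_psd_det_ne_zero q _ (Matrix.PosSemidef.of_dotProduct_mulVec_nonneg (symOfFun_isHermitian q f₀) fun v => ?_) hdet)
    rw [star_trivial]; exact hmem v
  filter_upwards [hSclosed.isOpen_compl.mem_nhds hf₀S] with f hf hPD
  exact hf fun v => by simpa [star_trivial] using hPD.posSemidef.dotProduct_mulVec_nonneg v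

lemma tendsto_abs_rpow (f₀ : SymIdx q → ℝ) (hdet : (symOfFun q f₀).det = 0) {r : ℝ}
    (hr : 0 < r) :
    Tendsto (fun f => |(symOfFun q f).det| ^ r) (𝓝 f₀) (𝓝 0) := by
  have h2 : Tendsto (fun f => |(symOfFun q f).det|) (𝓝 f₀) (𝓝 0) := by
    have := ((contDiff_d q).continuous.tendsto f₀)
    rw [hdet] at this
    simpa [Function.comp_def] using (_root_.continuous_abs.tendsto 0).comp this
  have h3 := ((Real.continuousAt_rpow_const 0 r (Or.inr hr.le)).tendsto).comp h2
  rwa [Real.zero_rpow hr.ne'] at h3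

lemma continuous_G (α : ℂ) (hr : 0 < α.re - ((q : ℝ) + 1) / 2) :
    Continuous (fun f : SymIdx q → ℝ => gAlpha q α (symOfFun q f)) := by
  rw [continuous_iff_continuousAt]
  intro f₀
  by_cases hPD : (symOfFun q f₀).PosDef
  · have hev : (fun f : SymIdx q → ℝ =>
        (((symOfFun q f).det : ℝ) : ℂ) ^ (α - ((q : ℂ) + 1) / 2)) =ᶠ[𝓝 f₀]
        (fun f => gAlpha q α (symOfFun q f)) := by
      filter_upwards [(isOpen_posDef q).mem_nhds hPD] with f hf
      rw [gAlpha, if_pos hf]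
    refine ContinuousAt.congr ?_ hev
    have h1 : ContinuousAt (fun z : ℂ => z ^ (α - ((q : ℂ) + 1) / 2))
        (((symOfFun q f₀).det : ℝ) : ℂ) :=
      continuousAt_cpow_const (Complex.ofReal_mem_slitPlane.mpr hPD.det_pos)
    exact ContinuousAt.comp (f := fun f : SymIdx q → ℝ => (((symOfFun q f).det : ℝ) : ℂ)) h1
      ((Complex.continuous_ofReal.comp (contDiff_d q).continuous).continuousAt)
  · by_cases hdet : (symOfFun q f₀).det = 0
    · rw [ContinuousAt, gAlpha_eq_zero q hPD]
      exact squeeze_zero_norm (norm_gAlpha_le q α hr) (tendsto_abs_rpow q f₀ hdet hr)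
    · have hev : (fun _ : SymIdx q → ℝ => (0:ℂ)) =ᶠ[𝓝 f₀]
          (fun f => gAlpha q α (symOfFun q f)) := by
        filter_upwards [eventually_not_posDef q f₀ hPD hdet] with f hf
        rw [gAlpha_eq_zero q hf]
      exact ContinuousAt.congr continuousAt_const hev

noncomputable def Dmap (α : ℂ) (f : SymIdx q → ℝ) : (SymIdx q → ℝ) →L[ℝ] ℂ :=
  (fderiv ℝ (fun g : SymIdx q → ℝ => (symOfFun q g).det) f).smulRight
    ((α - ((q : ℂ) + 1) / 2) * gAlpha q (α - 1) (symOfFun q f))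

lemma Dmap_eq_zero (α : ℂ) (f : SymIdx q → ℝ) (h : ¬ (symOfFun q f).PosDef) :
    Dmap q α f = 0 := by
  rw [Dmap, gAlpha_eq_zero q h, mul_zero]
  ext v; simp

lemma differentiable_d : Differentiable ℝ (fun f : SymIdx q → ℝ => (symOfFun q f).det) :=
  (contDiff_d q).differentiable (by simp)

lemma rpow_split {t : ℝ} (ht : 0 ≤ t) {r : ℝ} (hr : 1 < r) :
    t ^ r = t ^ (r - 1) * t := by
  rcases eq_or_lt_of_le ht with h | h
  · rw [← h, Real.zero_rpow (by linarith), Real.zero_rpow (by linarith), mul_zero]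
  · rw [show r = (r - 1) + 1 by ring, Real.rpow_add_one h.ne']
    ring_nf

lemma hasFDerivAt_G (α : ℂ) (hr : 1 < α.re - ((q : ℝ) + 1) / 2) (f₀ : SymIdx q → ℝ) :
    HasFDerivAt (fun f => gAlpha q α (symOfFun q f)) (Dmap q α f₀) f₀ := by
  have hd : HasFDerivAt (fun g : SymIdx q → ℝ => (symOfFun q g).det)
      (fderiv ℝ (fun g : SymIdx q → ℝ => (symOfFun q g).det) f₀) f₀ :=
    (differentiable_d q f₀).hasFDerivAt
  by_cases hPD : (symOfFun q f₀).PosDef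
  · have hder : HasDerivAt (fun t : ℝ => ((t : ℂ)) ^ (α - ((q : ℂ) + 1) / 2))
        ((α - ((q : ℂ) + 1) / 2) * ((((symOfFun q f₀).det : ℝ) : ℂ)) ^ ((α - ((q : ℂ) + 1) / 2) - 1))
        ((symOfFun q f₀).det) :=
      (Complex.hasStrictDerivAt_cpow_const
        (Complex.ofReal_mem_slitPlane.mpr hPD.det_pos)).hasDerivAt.comp_ofReal
    have hcomp := (hder.hasFDerivAt).comp f₀ hd
    have hev : (fun f : SymIdx q → ℝ =>
        (((symOfFun q f).det : ℝ) : ℂ) ^ (α - ((q : ℂ) + 1) / 2)) =ᶠ[𝓝 f₀]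
        (fun f => gAlpha q α (symOfFun q f)) := by
      filter_upwards [(isOpen_posDef q).mem_nhds hPD] with f hf
      rw [gAlpha, if_pos hf]
    refine (hev.hasFDerivAt_iff).mp ?_
    refine hcomp.congr_fderiv (Eq.symm ?_)
    rw [Dmap, gAlpha, if_pos hPD]
    ext v
    simp
    left; left
    ring_nf
  · rw [Dmap_eq_zero q α f₀ hPD]
    by_cases hdet : (symOfFun q f₀).det = 0
    · have hr' : (0:ℝ) < α.re - ((q : ℝ) + 1) / 2 := by linarith
      have hr'' : (0:ℝ) < α.re - ((q : ℝ) + 1) / 2 - 1 := by linarith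
      set r := α.re - ((q : ℝ) + 1) / 2 with hrdef
      rw [hasFDerivAt_iff_isLittleO, gAlpha_eq_zero q hPD]
      simp only [ContinuousLinearMap.zero_apply, sub_zero]
      have hO1 : (fun f => gAlpha q α (symOfFun q f)) =O[𝓝 f₀]
          (fun f => |(symOfFun q f).det| ^ r) := by
        refine IsBigO.of_bound 1 (Filter.Eventually.of_forall fun f => ?_)
        rw [one_mul, Real.norm_eq_abs, _root_.abs_of_nonneg (Real.rpow_nonneg (abs_nonneg _) _)]
        exact norm_gAlpha_le q α hr' f
      have hd0 : (fun f => |(symOfFun q f).det|) =O[𝓝 f₀] (fun f => ‖f - f₀‖) := by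
        have := hd.isBigO_sub
        rw [hdet] at this
        simpa using this.norm_norm
      have hsmall : (fun f => |(symOfFun q f).det| ^ (r - 1)) =o[𝓝 f₀]
          (fun _ => (1 : ℝ)) := by
        rw [Asymptotics.isLittleO_one_iff]
        exact tendsto_abs_rpow q f₀ hdet hr''
      have h2 : (fun f => |(symOfFun q f).det| ^ (r - 1) * |(symOfFun q f).det|) =o[𝓝 f₀]
          (fun f => 1 * ‖f - f₀‖) := hsmall.mul_isBigO hd0
      have h3 : (fun f => |(symOfFun q f).det| ^ r) =o[𝓝 f₀] (fun f => ‖f - f₀‖) := by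
        refine h2.congr' ?_ ?_
        · filter_upwards with f
          rw [← rpow_split (abs_nonneg _) hr]
        · filter_upwards with f
          rw [one_mul]
      exact hO1.trans_isLittleO (Asymptotics.isLittleO_norm_right.mp h3)
    · have hev : (fun _ : SymIdx q → ℝ => (0:ℂ)) =ᶠ[𝓝 f₀]
          (fun f => gAlpha q α (symOfFun q f)) := by
        filter_upwards [eventually_not_posDef q f₀ hPD hdet] with f hf
        rw [gAlpha_eq_zero q hf]
      exact (hev.hasFDerivAt_iff).mp (hasFDerivAt_const 0 f₀)

lemma contDiff_Dmap (α : ℂ) {m : ℕ}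
    (ih : ContDiff ℝ (m : ℕ∞) (fun f : SymIdx q → ℝ => gAlpha q (α - 1) (symOfFun q f))) :
    ContDiff ℝ (m : ℕ∞) (Dmap q α) := by
  have h1 : ContDiff ℝ (m : ℕ∞)
      (fun f : SymIdx q → ℝ => fderiv ℝ (fun g : SymIdx q → ℝ => (symOfFun q g).det) f) :=
    (contDiff_d q).fderiv_right (mod_cast le_top)
  exact h1.smulRight (contDiff_const.mul ih)

lemma key : ∀ (m : ℕ) (α : ℂ), ((q : ℝ) + 1) / 2 + m < α.re →
    ContDiff ℝ (m : ℕ∞) (fun f : SymIdx q → ℝ => gAlpha q α (symOfFun q f)) := by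
  intro m
  induction m with
  | zero =>
    intro α hα
    exact contDiff_zero.2 (continuous_G q α (by push_cast at hα; linarith))
  | succ m ih =>
    intro α hα
    push_cast at hα
    have hr1 : 1 < α.re - ((q : ℝ) + 1) / 2 := by linarith
    have hdiff : Differentiable ℝ (fun f : SymIdx q → ℝ => gAlpha q α (symOfFun q f)) :=
      fun f => (hasFDerivAt_G q α hr1 f).differentiableAt
    have hfd : fderiv ℝ (fun f : SymIdx q → ℝ => gAlpha q α (symOfFun q f)) = Dmap q α :=
      funext fun f => (hasFDerivAt_G q α hr1 f).fderiv
    have hih : ContDiff ℝ (m : ℕ∞) (fun f : SymIdx q → ℝ => gAlpha q (α - 1) (symOfFun q f)) := by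
      refine ih (α - 1) ?_
      rw [Complex.sub_re, Complex.one_re]
      linarith
    have hcast : ((m + 1 : ℕ) : ℕ∞) = (m : ℕ∞) + 1 := by exact_mod_cast rfl
    rw [hcast]
    rw [show (((m : ℕ∞) + 1 : ℕ∞) : WithTop ℕ∞) = ((m : ℕ∞) : WithTop ℕ∞) + 1 by exact_mod_cast rfl]
    rw [contDiff_succ_iff_fderiv]
    refine ⟨hdiff, ?_, ?_⟩
    · intro h
      exact absurd h (by simp)
    · rw [hfd]
      exact contDiff_Dmap q α hih


/-- If `Re α > (q+1)/2 + m`, then `g_α` is `m` times continuously differentiable on the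
space of real symmetric `q×q` matrices (expressed in linear coordinates). -/
theorem stmt_14 (hq : 1 ≤ q) (m : ℕ) (α : ℂ)
    (hα : α.re > ((q : ℝ) + 1) / 2 + m) :
    ContDiff ℝ (m : ℕ∞) (fun f : SymIdx q → ℝ => gAlpha q α (symOfFun q f)) := by
  exact key q m α hα
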